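/- arXiv:1804.09273 — 6 statements merged into one kernel-verified Lean document; each statement's English description precedes it below -/
import Mathlib

section
/- Let S_A be a subdivision operator of order d, let ℓ ≥ d, and let τ ∈ ℝ. If S_A satisfies the spectral condition with spectral polynomials p_{τ,k}(x) = (x+τ)^k/k! for k = 0,…,ℓ (i.e., S_A v_{p_{τ,k}} = 2^{-k} v_{p_{τ,k}}), then the associated Hermite subdivision scheme reproduces all polynomials of degree at most ℓ with respect to the parameter τ; that is, for each k ≤ ℓ, starting from initial data c^{[0]}_j = [q_k(j+τ), q_k'(j+τ), …, q_k^{(d)}(j+τ)]^T with q_k(x) = x^k/k!, the iterates c^{[n]} = D^{-n} S_A^n c^{[0]} satisfy (c^{[n]}_j)_m = q_k^{(m)}(2^{-n}(j+τ)) for all j ∈ ℤ, n ∈ ℕ, and m = 0,…,d. -/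
noncomputable def subd {d : ℕ} (A : ℤ → Matrix (Fin (d+1)) (Fin (d+1)) ℝ)
    (c : ℤ → Fin (d+1) → ℝ) : ℤ → Fin (d+1) → ℝ :=
  fun j => ∑ᶠ k : ℤ, (A (j - 2*k)).mulVec (c k)

noncomputable def vF (d : ℕ) (f : ℝ → ℝ) : ℤ → Fin (d+1) → ℝ :=
  fun j m => iteratedDeriv (m : ℕ) f (j : ℝ)

noncomputable def vP (d : ℕ) (p : Polynomial ℝ) : ℤ → Fin (d+1) → ℝ :=
  fun j m => (Polynomial.derivative^[(m : ℕ)] p).eval (j : ℝ)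

noncomputable def Dinv (d n : ℕ) (c : ℤ → Fin (d+1) → ℝ) : ℤ → Fin (d+1) → ℝ :=
  fun j m => (2:ℝ)^(n * (m:ℕ)) * c j m

def Reproduces {d : ℕ} (A : ℤ → Matrix (Fin (d+1)) (Fin (d+1)) ℝ) (τ : ℝ) (f : ℝ → ℝ) : Prop :=
  ∀ (n : ℕ) (j : ℤ) (m : Fin (d+1)),
    Dinv d n ((subd A)^[n] (fun i m => iteratedDeriv (m:ℕ) f ((i:ℝ)+τ))) j m
      = iteratedDeriv (m:ℕ) f (((2:ℝ)^n)⁻¹ * ((j:ℝ)+τ))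

/-! The initial data of the scheme for `qₖ(x) = xᵏ / k!` is the data `vF d pₖ` of the shifted
polynomial `pₖ(x) = qₖ(x + τ)`, an eigenvector of `S_A` for `2⁻ᵏ`. Hence `S_Aⁿ c⁽⁰⁾ = 2⁻ⁿᵏ c⁽⁰⁾`,
and the rescaling by `D⁻ⁿ` is matched by the homogeneity `qₖ(c x) = cᵏ qₖ(x)`, which
differentiates to `cᵐ qₖ⁽ᵐ⁾(c x) = cᵏ qₖ⁽ᵐ⁾(x)`. -/

section Subdivision

variable {d : ℕ} (A : ℤ → Matrix (Fin (d+1)) (Fin (d+1)) ℝ)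

theorem subd_smul (s : ℝ) (c : ℤ → Fin (d+1) → ℝ) :
    subd A (fun j => s • c j) = fun j => s • subd A c j := by
  funext j
  simp only [subd, Matrix.mulVec_smul, smul_finsum]

theorem iterate_subd_of_eigen {c : ℤ → Fin (d+1) → ℝ} {μ : ℝ}
    (hc : subd A c = fun j => μ • c j) (n : ℕ) :
    (subd A)^[n] c = fun j => μ ^ n • c j := by
  induction n with
  | zero => simp
  | succ n ih =>
    rw [Function.iterate_succ_apply', ih, subd_smul, hc]
    simp only [smul_smul, pow_succ]

end Subdivision

theorem vF_comp_add_const (d : ℕ) (f : ℝ → ℝ) (τ : ℝ) :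
    vF d (fun x => f (x + τ)) = fun (i : ℤ) (m : Fin (d+1)) => iteratedDeriv m f (i + τ) := by
  funext i m
  exact congrFun (iteratedDeriv_comp_add_const m f τ) i

theorem iteratedDeriv_comp_const_mul_of_homogeneous {𝕜 : Type*} [NontriviallyNormedField 𝕜]
    {f : 𝕜 → 𝕜} {m k : ℕ} (hf : ContDiff 𝕜 m f) {c : 𝕜} (hhom : ∀ x, f (c * x) = c ^ k * f x)
    (y : 𝕜) : c ^ m * iteratedDeriv m f (c * y) = c ^ k * iteratedDeriv m f y := by
  rw [← congrFun (iteratedDeriv_comp_const_mul hf c) y, funext hhom]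
  exact iteratedDeriv_const_mul_field _ f

theorem spectral_condition_implies_reproduction_general {d : ℕ}
    (A : ℤ → Matrix (Fin (d+1)) (Fin (d+1)) ℝ)
    (ℓ : ℕ) (τ : ℝ)
    (hspec : ∀ k ≤ ℓ,
      subd A (vF d (fun x => (x+τ)^k / k.factorial))
        = fun j => ((2:ℝ)^k)⁻¹ • vF d (fun x => (x+τ)^k / k.factorial) j) :
    ∀ k ≤ ℓ, Reproduces A τ (fun x => x^k / k.factorial) := by
  intro k hk n j m
  set q : ℝ → ℝ := fun x => x ^ k / k.factorial
  have hinit : (fun (i : ℤ) (m : Fin (d+1)) => iteratedDeriv m q (i + τ))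
      = vF d (fun x => (x + τ) ^ k / k.factorial) :=
    (vF_comp_add_const d q τ).symm
  have hscale := iteratedDeriv_comp_const_mul_of_homogeneous (m := m) (k := k)
    (f := q) (c := ((2:ℝ) ^ n)⁻¹) (by fun_prop) (fun x => by simp only [q]; ring) (j + τ)
  have hcancel : (2:ℝ) ^ (n * m) * ((2:ℝ) ^ n)⁻¹ ^ (m : ℕ) = 1 := by
    rw [pow_mul, ← mul_pow, mul_inv_cancel₀ (by positivity), one_pow]
  rw [hinit, iterate_subd_of_eigen A (hspec k hk) n, ← hinit]
  simp only [Dinv, Pi.smul_apply, smul_eq_mul]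
  calc (2:ℝ) ^ (n * m) * (((2:ℝ) ^ k)⁻¹ ^ n * iteratedDeriv m q (j + τ))
      = (2:ℝ) ^ (n * m) * (((2:ℝ) ^ n)⁻¹ ^ k * iteratedDeriv m q (j + τ)) := by
        rw [inv_pow, inv_pow, ← pow_mul, ← pow_mul, mul_comm k n]
    _ = iteratedDeriv m q (((2:ℝ) ^ n)⁻¹ * (j + τ)) := by
        rw [← hscale, ← mul_assoc, hcancel, one_mul]

theorem spectral_condition_implies_reproduction {d : ℕ}
    (A : ℤ → Matrix (Fin (d+1)) (Fin (d+1)) ℝ)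
    (hfin : (Function.support A).Finite)
    (ℓ : ℕ) (hdl : d ≤ ℓ) (τ : ℝ)
    (hspec : ∀ k ≤ ℓ,
      subd A (vF d (fun x => (x+τ)^k / k.factorial))
        = fun j => ((2:ℝ)^k)⁻¹ • vF d (fun x => (x+τ)^k / k.factorial) j) :
    ∀ k ≤ ℓ, Reproduces A τ (fun x => x^k / k.factorial) :=
  spectral_condition_implies_reproduction_general A ℓ τ hspec
end

section
/- Let S_A be a subdivision operator of order d, let ℓ ≥ d, and let τ ∈ ℝ. If the associated Hermite scheme reproduces all polynomials of degree at most ℓ with respect to the parameter τ, then S_A satisfies the spectral condition with spectral polynomials p_{τ,k}(x) = (x+τ)^k/k!, i.e., S_A v_{p_{τ,k}} = 2^{-k} v_{p_{τ,k}} for k = 0,…,ℓ. -/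
/-! The spectral condition only needs one subdivision step: at level one, reproduction of the
monomial `f x = x ^ k / k!` says that `S_A` maps the samples of `f (· + τ)` to
`2⁻ᵐ f⁽ᵐ⁾ ((j + τ) / 2)`, and `f⁽ᵐ⁾` is homogeneous of degree `k - m`, so that
`2⁻ᵐ f⁽ᵐ⁾ (x / 2) = 2⁻ᵏ f⁽ᵐ⁾ x`. -/

theorem iteratedDeriv_const_mul_of_homogeneous {𝕜 : Type*} [NontriviallyNormedField 𝕜]
    {f : 𝕜 → 𝕜} {m : ℕ} (hf : ContDiff 𝕜 m f) {c : 𝕜} {k : ℕ}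
    (hhom : ∀ x, f (c * x) = c ^ k * f x) (x : 𝕜) :
    c ^ m * iteratedDeriv m f (c * x) = c ^ k * iteratedDeriv m f x := by
  calc c ^ m * iteratedDeriv m f (c * x)
      = iteratedDeriv m (fun y => f (c * y)) x := by rw [iteratedDeriv_comp_const_mul hf]
    _ = iteratedDeriv m (fun y => c ^ k * f y) x := by simp only [hhom]
    _ = c ^ k * iteratedDeriv m f x := iteratedDeriv_const_mul_field _ _

theorem Reproduces.subd_apply {d : ℕ} {A : ℤ → Matrix (Fin (d+1)) (Fin (d+1)) ℝ} {τ : ℝ}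
    {f : ℝ → ℝ} (h : Reproduces A τ f) (j : ℤ) (m : Fin (d+1)) :
    subd A (fun i m => iteratedDeriv m f (i + τ)) j m
      = ((2:ℝ) ^ (m : ℕ))⁻¹ * iteratedDeriv m f (2⁻¹ * (j + τ)) := by
  have h1 := h 1 j m
  simp only [Dinv, Function.iterate_one, one_mul, pow_one] at h1
  rw [← h1, inv_mul_cancel_left₀ (by positivity)]

theorem reproduction_implies_spectral_condition_general {d : ℕ}
    (A : ℤ → Matrix (Fin (d+1)) (Fin (d+1)) ℝ)
    (ℓ : ℕ) (τ : ℝ)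
    (hrep : ∀ p : Polynomial ℝ, p.natDegree ≤ ℓ → Reproduces A τ (fun x => p.eval x)) :
    ∀ k ≤ ℓ,
      subd A (vF d (fun x => (x+τ)^k / k.factorial))
        = fun j => ((2:ℝ)^k)⁻¹ • vF d (fun x => (x+τ)^k / k.factorial) j := by
  intro k hk
  set f : ℝ → ℝ := fun x => x ^ k / k.factorial
  have hrepf : Reproduces A τ f := by
    have hdeg : (Polynomial.C (k.factorial : ℝ)⁻¹ * Polynomial.X ^ k).natDegree ≤ ℓ :=
      (Polynomial.natDegree_C_mul_X_pow_le _ k).trans hk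
    simpa [f, div_eq_inv_mul] using hrep _ hdeg
  have hv : vF d (fun x => (x + τ) ^ k / k.factorial)
      = fun (i : ℤ) (m : Fin (d+1)) => iteratedDeriv m f (i + τ) := by
    funext i m
    exact congrFun (iteratedDeriv_comp_add_const (m : ℕ) f τ) i
  have hhom : ∀ x, f (2⁻¹ * x) = (2⁻¹) ^ k * f x := fun x => by simp only [f]; ring
  rw [hv]
  funext j m
  rw [hrepf.subd_apply, Pi.smul_apply, smul_eq_mul, ← inv_pow, ← inv_pow,
    iteratedDeriv_const_mul_of_homogeneous (by fun_prop) hhom]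

theorem reproduction_implies_spectral_condition {d : ℕ}
    (A : ℤ → Matrix (Fin (d+1)) (Fin (d+1)) ℝ)
    (hfin : (Function.support A).Finite)
    (ℓ : ℕ) (hdl : d ≤ ℓ) (τ : ℝ)
    (hrep : ∀ p : Polynomial ℝ, p.natDegree ≤ ℓ → Reproduces A τ (fun x => p.eval x)) :
    ∀ k ≤ ℓ,
      subd A (vF d (fun x => (x+τ)^k / k.factorial))
        = fun j => ((2:ℝ)^k)⁻¹ • vF d (fun x => (x+τ)^k / k.factorial) j :=
  reproduction_implies_spectral_condition_general A ℓ τ hrep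
end

section
/- Let S_A be a subdivision operator of order d satisfying the spectral condition with polynomials p_{τ,k}(x)=(x+τ)^k/k!, k=0,…,ℓ (ℓ ≥ d). If the spectral polynomials of the de Rham transform S_Ā satisfy the recursion p̄_0 = 1 and p̄_k = p_{τ,k} + Σ_{m=0}^{k−1} μ_{k,m} p̄_m where μ_{k,m} = −λ_{k,m} · 2^{m−k}/(2^k − 2^m) and the λ_{k,m} are determined by p_{τ,k}(2x+1) = 2^k p_{τ,k}(x) + Σ_{m=0}^{k−1} λ_{k,m} p̄_m(x), then p̄_k(x) = (x + (3τ−1)/2)^k/k! for all k = 0,…,ℓ. -/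
/-
Expand everything in the basis `q_m = (x + σ)^m / m!` with `σ = (3τ - 1)/2`, and put
`δ = τ - σ`. By Taylor, `p_{τ,k} = ∑_{m ≤ k} δ^(k-m)/(k-m)! q_m`, and
`p_{τ,k}(2x+1) = 2^k p_{(1+τ)/2,k}` has coefficients `2^k (2δ)^(k-m)/(k-m)!` because
`(1+τ)/2 - σ = 2δ`. Hence `λ_{k,m} = 2^k (2^(k-m) - 1) δ^(k-m)/(k-m)!`; the factor `2^(k-m) - 1`
cancels the denominator of `μ_{k,m}`, which becomes `-δ^(k-m)/(k-m)!`, so the recursion for `p̄_k`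
is the Taylor expansion of `p_{τ,k}` with all terms but `q_k` removed. Induction on `k`.
-/
open Polynomial Finset
open scoped Nat

section ShiftedMonomial

variable {K : Type*} [Field K]

/-- The paper's `p_{a,k}(x) = (x + a)^k / k!`. -/
noncomputable def shiftedMonomial (a : K) (k : ℕ) : K[X] := C ((k ! : K)⁻¹) * (X + C a) ^ k

lemma eval_shiftedMonomial (a x : K) (k : ℕ) :
    (shiftedMonomial a k).eval x = (x + a) ^ k / k ! := by
  simp [shiftedMonomial, div_eq_inv_mul]

variable [CharZero K]

lemma degree_shiftedMonomial (a : K) (k : ℕ) : (shiftedMonomial a k).degree = k := by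
  have hk : ((k ! : K)⁻¹) ≠ 0 := inv_ne_zero (Nat.cast_ne_zero.mpr k.factorial_ne_zero)
  rw [shiftedMonomial, degree_C_mul hk, degree_pow, degree_X_add_C, nsmul_one]

lemma linearIndependent_shiftedMonomial (b : K) : LinearIndependent K (shiftedMonomial b) :=
  (⟨shiftedMonomial b, degree_shiftedMonomial b⟩ : Sequence K).linearIndependent

lemma eq_of_sum_C_mul_shiftedMonomial_eq (b : K) {s : Finset ℕ} {f g : ℕ → K}
    (h : ∑ m ∈ s, C (f m) * shiftedMonomial b m = ∑ m ∈ s, C (g m) * shiftedMonomial b m) :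
    ∀ m ∈ s, f m = g m :=
  linearIndependent_iff'ₛ.mp (linearIndependent_shiftedMonomial b) s f g
    (by simpa only [C_mul'] using h)

lemma shiftedMonomial_eq_sum_add (a b : K) (k : ℕ) :
    shiftedMonomial a k
      = ∑ m ∈ range k, C ((a - b) ^ (k - m) / (k - m)!) * shiftedMonomial b m
        + shiftedMonomial b k := by
  refine Polynomial.funext fun x => ?_
  simp only [eval_add, eval_finsetSum, eval_mul, eval_C, eval_shiftedMonomial]
  rw [show x + a = (x + b) + (a - b) by ring, add_pow, sum_range_succ, Nat.sub_self, pow_zero,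
    Nat.choose_self, add_div, sum_div]
  congr 1
  · refine sum_congr rfl fun m hm => ?_
    have hmk : m ≤ k := (mem_range.mp hm).le
    have : (k ! : K) ≠ 0 := Nat.cast_ne_zero.mpr k.factorial_ne_zero
    rw [Nat.cast_choose K hmk]
    field_simp
  · simp

lemma shiftedMonomial_comp_two_mul_X_add_one (a : K) (k : ℕ) :
    (shiftedMonomial a k).comp (2 * X + 1) = C (2 ^ k) * shiftedMonomial ((1 + a) / 2) k := by
  refine Polynomial.funext fun x => ?_
  simp only [eval_comp, eval_mul, eval_C, eval_shiftedMonomial, eval_add, eval_ofNat, eval_X,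
    eval_one]
  rw [show 2 * x + 1 + a = 2 * (x + (1 + a) / 2) by ring, mul_pow, mul_div_assoc]

lemma comp_two_mul_X_add_one_sub_smul (a b : K) (k : ℕ) :
    (shiftedMonomial a k).comp (2 * X + 1) - (2 : K) ^ k • shiftedMonomial a k
      = ∑ m ∈ range k,
          C (2 ^ k * (((1 + a) / 2 - b) ^ (k - m) - (a - b) ^ (k - m)) / (k - m)!)
            * shiftedMonomial b m := by
  rw [shiftedMonomial_comp_two_mul_X_add_one, smul_eq_C_mul,
    shiftedMonomial_eq_sum_add ((1 + a) / 2) b, shiftedMonomial_eq_sum_add a b, ← mul_sub,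
    add_sub_add_right_eq_sub, ← sum_sub_distrib, mul_sum]
  refine sum_congr rfl fun m _ => ?_
  rw [← sub_mul, ← C_sub, ← mul_assoc, ← C_mul]
  congr 2
  ring

lemma eq_shiftedMonomial_of_deRham_recursion (τ : K) (k : ℕ) (pbar : ℕ → K[X])
    (lam : ℕ → K)
    (hprev : ∀ m < k, pbar m = shiftedMonomial ((3 * τ - 1) / 2) m)
    (hrec : pbar k = shiftedMonomial τ k
      + ∑ m ∈ range k, C (-(lam m) * ((2 : K) ^ (k - m))⁻¹ / ((2 : K) ^ k - 2 ^ m)) * pbar m)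
    (hlam : (shiftedMonomial τ k).comp (2 * X + 1)
      = (2 : K) ^ k • shiftedMonomial τ k + ∑ m ∈ range k, C (lam m) * pbar m) :
    pbar k = shiftedMonomial ((3 * τ - 1) / 2) k := by
  set σ := (3 * τ - 1) / 2
  set δ := τ - σ
  have hσ : (1 + τ) / 2 - σ = 2 * δ := by ring
  rw [sum_congr rfl fun m hm => by rw [hprev m (mem_range.mp hm)]] at hrec hlam
  have hlam_eq :
      ∀ m ∈ range k, lam m = 2 ^ k * ((2 * δ) ^ (k - m) - δ ^ (k - m)) / (k - m)! := by
    refine eq_of_sum_C_mul_shiftedMonomial_eq σ ?_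
    rw [← hσ, ← comp_two_mul_X_add_one_sub_smul, hlam, add_sub_cancel_left]
  have hmu : ∀ m ∈ range k, -(lam m) * ((2 : K) ^ (k - m))⁻¹ / ((2 : K) ^ k - 2 ^ m)
      = -(δ ^ (k - m) / (k - m)!) := by
    intro m hm
    have hmk : m < k := mem_range.mp hm
    have h2k : (2 : K) ^ k = 2 ^ m * 2 ^ (k - m) := by rw [← pow_add, Nat.add_sub_cancel' hmk.le]
    rw [hlam_eq m hm, h2k, mul_pow]
    have hj : 0 < k - m := Nat.sub_pos_of_lt hmk
    generalize k - m = j at hj ⊢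
    have h2j : (2 : K) ^ j - 1 ≠ 0 :=
      sub_ne_zero.mpr (by exact_mod_cast (Nat.one_lt_two_pow hj.ne').ne')
    have hfact : (j ! : K) ≠ 0 := Nat.cast_ne_zero.mpr j.factorial_ne_zero
    field_simp
  rw [hrec, sum_congr rfl fun m hm => by rw [hmu m hm], shiftedMonomial_eq_sum_add τ σ k]
  simp only [C_neg, neg_mul, sum_neg_distrib]
  abel

end ShiftedMonomial

theorem deRham_spectral_polys_general
    (ℓ : ℕ) (τ : ℝ)
    (pbar : ℕ → Polynomial ℝ) (lam : ℕ → ℕ → ℝ)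
    (h0 : pbar 0 = 1)
    (hrec : ∀ k, 1 ≤ k → k ≤ ℓ →
      pbar k = Polynomial.C ((k.factorial : ℝ)⁻¹) * (Polynomial.X + Polynomial.C τ)^k
        + ∑ m ∈ Finset.range k,
            Polynomial.C (-(lam k m) * ((2:ℝ)^(k-m))⁻¹ / ((2:ℝ)^k - (2:ℝ)^m)) * pbar m)
    (hlam : ∀ k, 1 ≤ k → k ≤ ℓ →
      (Polynomial.C ((k.factorial : ℝ)⁻¹) * (Polynomial.X + Polynomial.C τ)^k).comp
          (2 * Polynomial.X + 1)
        = (2:ℝ)^k • (Polynomial.C ((k.factorial : ℝ)⁻¹) * (Polynomial.X + Polynomial.C τ)^k)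
          + ∑ m ∈ Finset.range k, Polynomial.C (lam k m) * pbar m) :
    ∀ k ≤ ℓ,
      pbar k = Polynomial.C ((k.factorial : ℝ)⁻¹)
        * (Polynomial.X + Polynomial.C ((3*τ-1)/2))^k := by
  intro k
  induction k using Nat.strong_induction_on with
  | _ k ih =>
    intro hk
    rcases Nat.eq_zero_or_pos k with rfl | hk1
    · simp [h0]
    exact eq_shiftedMonomial_of_deRham_recursion τ k pbar (lam k)
      (fun m hm => ih m hm (hm.le.trans hk)) (hrec k hk1 hk) (hlam k hk1 hk)

theorem deRham_spectral_polys {d : ℕ}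
    (A : ℤ → Matrix (Fin (d+1)) (Fin (d+1)) ℝ)
    (hfin : (Function.support A).Finite)
    (ℓ : ℕ) (hdl : d ≤ ℓ) (τ : ℝ)
    (hspec : ∀ k ≤ ℓ,
      subd A (vF d (fun x => (x+τ)^k / k.factorial))
        = fun j => ((2:ℝ)^k)⁻¹ • vF d (fun x => (x+τ)^k / k.factorial) j)
    (pbar : ℕ → Polynomial ℝ) (lam : ℕ → ℕ → ℝ)
    (h0 : pbar 0 = 1)
    (hrec : ∀ k, 1 ≤ k → k ≤ ℓ →
      pbar k = Polynomial.C ((k.factorial : ℝ)⁻¹) * (Polynomial.X + Polynomial.C τ)^k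
        + ∑ m ∈ Finset.range k,
            Polynomial.C (-(lam k m) * ((2:ℝ)^(k-m))⁻¹ / ((2:ℝ)^k - (2:ℝ)^m)) * pbar m)
    (hlam : ∀ k, 1 ≤ k → k ≤ ℓ →
      (Polynomial.C ((k.factorial : ℝ)⁻¹) * (Polynomial.X + Polynomial.C τ)^k).comp
          (2 * Polynomial.X + 1)
        = (2:ℝ)^k • (Polynomial.C ((k.factorial : ℝ)⁻¹) * (Polynomial.X + Polynomial.C τ)^k)
          + ∑ m ∈ Finset.range k, Polynomial.C (lam k m) * pbar m) :
    ∀ k ≤ ℓ,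
      pbar k = Polynomial.C ((k.factorial : ℝ)⁻¹)
        * (Polynomial.X + Polynomial.C ((3*τ-1)/2))^k :=
  deRham_spectral_polys_general ℓ τ pbar lam h0 hrec hlam
end

section
/- Let S_A be a subdivision operator of order d whose associated Hermite scheme is C^d-convergent with parametrization τ, and suppose S_A satisfies the spectral condition of order ℓ ≥ d with spectral polynomials p_{τ,k}(x) = Σ_{s=0}^{k} c_{ks}(x+τ)^s (with c_{kk} = 1/k!). Then for initial data c^{[0]}_k given by (c^{[0]}_k)_j = [p_{τ,k}(j), …, p_{τ,k}^{(d)}(j)]^T, the iterates c^{[n]}_k = D^{-n} 2^{-kn} c^{[0]}_k converge, uniformly on every compact set K ⊂ ℝ, to Φ_k(2^{-n}(j+τ)) where Φ_k(x) = [q_k(x), …, q_k^{(d)}(x)]^T and q_k(x) = x^k/k!; that is, lim_{n→∞} sup_{j∈ℤ∩K·2^n, 2^{-n}(j+τ)∈K} |(c^{[n]}_k)_j − Φ_k(2^{-n}(j+τ))|_∞ = 0. -/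
/-!
Write `j + τ = 2ⁿ y`. By the chain rule, `2^{n(m-k)} p_{τ,k}^{(m)}(j)` is the `m`-th derivative at `y`
of the rescaled polynomial `2^{-nk} p_{τ,k}(2ⁿ y - τ) = ∑ₛ c_{ks} 2^{-n(k-s)} yˢ`, whose leading term
`yᵏ/k!` is `q_k(y)`. Every lower coefficient carries a factor at most `2⁻ⁿ`, so the derivatives of the
remaining terms tend to zero uniformly for `y` in the bounded set `K`.
-/

open Finset Filter

theorem iteratedDeriv_sum_mul_pow {𝕜 : Type*} [NontriviallyNormedField 𝕜] (a : ℕ → 𝕜)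
    (F : Finset ℕ) (m : ℕ) (x : 𝕜) :
    iteratedDeriv m (fun x => ∑ s ∈ F, a s * x ^ s) x
      = ∑ s ∈ F, a s * (s.descFactorial m * x ^ (s - m)) := by
  rw [iteratedDeriv_fun_sum fun s _ => by fun_prop]
  simp_rw [iteratedDeriv_const_mul_field, iteratedDeriv_pow]

theorem rescaled_iteratedDeriv_sub_monomial (c : ℕ → ℝ) (k m : ℕ)
    (hck : c k = (k.factorial : ℝ)⁻¹) {t : ℝ} (ht : t ≠ 0) (τ x : ℝ) :
    t ^ m * (t ^ k)⁻¹ * iteratedDeriv m (fun x => ∑ s ∈ range (k + 1), c s * (x + τ) ^ s) x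
        - iteratedDeriv m (fun x : ℝ => x ^ k / k.factorial) (t⁻¹ * (x + τ))
      = ∑ s ∈ range k, c s * (t ^ s / t ^ k) * (s.descFactorial m * (t⁻¹ * (x + τ)) ^ (s - m)) := by
  set y := t⁻¹ * (x + τ)
  set Q : ℝ → ℝ := fun u => ∑ s ∈ range (k + 1), c s * u ^ s
  have hshift : iteratedDeriv m (fun x => Q (x + τ)) x = iteratedDeriv m Q (t * y) := by
    rw [iteratedDeriv_comp_add_const, mul_inv_cancel_left₀ ht]
  have hscale : t ^ m * iteratedDeriv m Q (t * y) = iteratedDeriv m (fun u => Q (t * u)) y := by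
    rw [iteratedDeriv_comp_const_mul (by fun_prop)]
  have hexpand : (fun u => (t ^ k)⁻¹ * Q (t * u))
      = fun u => ∑ s ∈ range (k + 1), c s * (t ^ s / t ^ k) * u ^ s := by
    funext u
    rw [mul_sum]
    refine sum_congr rfl fun s _ => ?_
    rw [mul_pow]
    ring
  calc _ = iteratedDeriv m (fun u => (t ^ k)⁻¹ * Q (t * u)) y
        - iteratedDeriv m (fun x : ℝ => x ^ k / k.factorial) y := by
        rw [iteratedDeriv_const_mul_field, ← hscale, ← hshift]
        ring
    _ = _ := by
        rw [hexpand, iteratedDeriv_sum_mul_pow, sum_range_succ, iteratedDeriv_div_const,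
          iteratedDeriv_pow, hck, div_self (pow_ne_zero k ht)]
        ring

section OrderedField

variable {α : Type*} [Field α] [LinearOrder α] [IsStrictOrderedRing α]

theorem descFactorial_mul_abs_pow_le (s m : ℕ) {y M : α} (hy : |y| ≤ M) (hM : 1 ≤ M) :
    s.descFactorial m * |y| ^ (s - m) ≤ s.factorial * M ^ s := by
  rcases le_or_gt m s with hms | hsm
  · have hdesc : (s.descFactorial m : α) ≤ s.factorial := by
      exact_mod_cast (Nat.le_mul_of_pos_left _ (Nat.factorial_pos (s - m))).trans_eq
        (Nat.factorial_mul_descFactorial hms)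
    gcongr
    calc |y| ^ (s - m) ≤ M ^ (s - m) := by gcongr
      _ ≤ M ^ s := pow_le_pow_right₀ hM (Nat.sub_le s m)
  · rw [Nat.descFactorial_eq_zero_iff_lt.mpr hsm, Nat.cast_zero, zero_mul]
    positivity

theorem pow_div_pow_le_inv {t : α} (ht : 1 ≤ t) {s k : ℕ} (hsk : s < k) :
    t ^ s / t ^ k ≤ t⁻¹ := by
  rw [div_le_iff₀ (by positivity), inv_mul_eq_div, le_div_iff₀ (by positivity), ← pow_succ]
  exact pow_le_pow_right₀ ht hsk

theorem abs_sum_lower_terms_le (c : ℕ → α) (k m : ℕ) {t y M : α} (ht : 1 ≤ t) (hy : |y| ≤ M)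
    (hM : 1 ≤ M) :
    |∑ s ∈ range k, c s * (t ^ s / t ^ k) * (s.descFactorial m * y ^ (s - m))|
      ≤ t⁻¹ * ∑ s ∈ range k, |c s| * s.factorial * M ^ s := by
  rw [mul_sum]
  refine (abs_sum_le_sum_abs _ _).trans (sum_le_sum fun s hs => ?_)
  have hts : 0 < t ^ s / t ^ k := by positivity
  rw [abs_mul, abs_mul, abs_mul, abs_of_pos hts, abs_pow, Nat.abs_cast]
  calc |c s| * (t ^ s / t ^ k) * (s.descFactorial m * |y| ^ (s - m))
      ≤ |c s| * t⁻¹ * (s.factorial * M ^ s) := by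
        gcongr |c s| * ?_ * ?_
        · exact pow_div_pow_le_inv ht (mem_range.mp hs)
        · exact descFactorial_mul_abs_pow_le s m hy hM
    _ = t⁻¹ * (|c s| * s.factorial * M ^ s) := by ring

end OrderedField

theorem exists_inv_two_pow_mul_lt (B : ℝ) {ε : ℝ} (hε : 0 < ε) :
    ∃ N : ℕ, ∀ n ≥ N, ((2 : ℝ) ^ n)⁻¹ * B < ε := by
  have hlim : Tendsto (fun n : ℕ => ((2 : ℝ) ^ n)⁻¹ * B) atTop (nhds 0) := by
    simpa using (tendsto_inv_atTop_zero.comp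
      (tendsto_pow_atTop_atTop_of_one_lt one_lt_two)).mul_const B
  exact eventually_atTop.mp (hlim.eventually (gt_mem_nhds hε))

theorem spectral_iterates_generate_monomial_general (d k : ℕ)
    (τ : ℝ) (c : ℕ → ℝ) (hck : c k = (k.factorial : ℝ)⁻¹)
    (K : Set ℝ) (hK : IsCompact K) :
    ∀ ε > 0, ∃ N : ℕ, ∀ n ≥ N, ∀ j : ℤ,
      ((2:ℝ)^n)⁻¹ * ((j:ℝ)+τ) ∈ K →
      ∀ m : Fin (d+1),
        |(2:ℝ)^(n*(m:ℕ)) * (((2:ℝ)^k)⁻¹)^n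
            * iteratedDeriv (m:ℕ)
                (fun x : ℝ => ∑ s ∈ Finset.range (k+1), c s * (x+τ)^s) (j:ℝ)
          - iteratedDeriv (m:ℕ) (fun x : ℝ => x^k / k.factorial)
              (((2:ℝ)^n)⁻¹ * ((j:ℝ)+τ))| < ε := by
  intro ε hε
  obtain ⟨M, hKM⟩ := hK.isBounded.exists_norm_le
  obtain ⟨N, hN⟩ := exists_inv_two_pow_mul_lt
    (∑ s ∈ range k, |c s| * s.factorial * max 1 M ^ s) hε
  refine ⟨N, fun n hn j hj m => ?_⟩
  have hcoef : (2 : ℝ) ^ (n * (m : ℕ)) * ((2 ^ k)⁻¹) ^ n = (2 ^ n) ^ (m : ℕ) * ((2 ^ n) ^ k)⁻¹ := by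
    ring
  rw [hcoef, rescaled_iteratedDeriv_sub_monomial c k m hck (by positivity) τ j]
  calc _ ≤ ((2 : ℝ) ^ n)⁻¹ * ∑ s ∈ range k, |c s| * s.factorial * max 1 M ^ s :=
        abs_sum_lower_terms_le c k m (one_le_pow₀ one_le_two)
          ((hKM _ hj).trans (le_max_right 1 M)) (le_max_left 1 M)
    _ < ε := hN n hn

theorem spectral_iterates_generate_monomial (d ℓ k : ℕ) (hdl : d ≤ ℓ) (hk : k ≤ ℓ)
    (τ : ℝ) (c : ℕ → ℝ) (hck : c k = (k.factorial : ℝ)⁻¹)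
    (K : Set ℝ) (hK : IsCompact K) :
    ∀ ε > 0, ∃ N : ℕ, ∀ n ≥ N, ∀ j : ℤ,
      ((2:ℝ)^n)⁻¹ * ((j:ℝ)+τ) ∈ K →
      ∀ m : Fin (d+1),
        |(2:ℝ)^(n*(m:ℕ)) * (((2:ℝ)^k)⁻¹)^n
            * iteratedDeriv (m:ℕ)
                (fun x : ℝ => ∑ s ∈ Finset.range (k+1), c s * (x+τ)^s) (j:ℝ)
          - iteratedDeriv (m:ℕ) (fun x : ℝ => x^k / k.factorial)
              (((2:ℝ)^n)⁻¹ * ((j:ℝ)+τ))| < ε :=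
  spectral_iterates_generate_monomial_general d k τ c hck K hK
end

section
/- The Hermite subdivision operator S_{a^1} of order 1 with mask a^1 supported on {−2,…,2} given by a^1_{−2} = [[1/128, 7/256],[0, 1/16]], a^1_{−1} = [[1/2, −1/16],[15/16, −7/32]], a^1_0 = [[63/64, 0],[0, 3/8]], a^1_1 = [[1/2, 1/16],[−15/16, −7/32]], a^1_2 = [[1/128, −7/256],[0, 1/16]] satisfies the spectral condition of order 2 with spectral polynomials p_0 = 1, p_1(x) = x, p_2(x) = x²/2 − 1/12; that is, S_{a^1} v_{p_k} = 2^{-k} v_{p_k} for k = 0, 1, 2. -/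
noncomputable def a1 (j : ℤ) : Matrix (Fin 2) (Fin 2) ℝ :=
  if j = -2 then !![1/128, 7/256; 0, 1/16]
  else if j = -1 then !![1/2, -1/16; 15/16, -7/32]
  else if j = 0 then !![63/64, 0; 0, 3/8]
  else if j = 1 then !![1/2, 1/16; -15/16, -7/32]
  else if j = 2 then !![1/128, -7/256; 0, 1/16]
  else 0

noncomputable def a2 (j : ℤ) : Matrix (Fin 2) (Fin 2) ℝ :=
  if j = -2 then !![7/96, -25/1344; 77/384, -19/384]
  else if j = -1 then !![1/2, -5/56; 7/12, -1/24]
  else if j = 0 then !![41/48, 0; 0, 19/96]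
  else if j = 1 then !![1/2, 5/56; -7/12, -1/24]
  else if j = 2 then !![7/96, 25/1344; -77/384, -19/384]
  else 0

/-!
Since `a1` vanishes outside `{-2, …, 2}`, the entry of `S_{a1} c` at `2i` only involves
`c (i-1), c i, c (i+1)` and the entry at `2i+1` only `c i, c (i+1)`, through explicit
2×2 matrices. Each eigen-identity then splits into polynomial identities in `i`, one for each
parity of the index and each component of `(p j, p' j)`.
-/

section Subdivision

variable {d : ℕ} {A : ℤ → Matrix (Fin (d+1)) (Fin (d+1)) ℝ}

theorem subd_apply_eq_sum {s : Finset ℤ} (c : ℤ → Fin (d+1) → ℝ) (j : ℤ)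
    (hs : ∀ k, A (j - 2*k) ≠ 0 → k ∈ s) :
    subd A c j = ∑ k ∈ s, (A (j - 2*k)).mulVec (c k) := by
  refine finsum_eq_finsetSum_of_support_subset _ fun k hk => hs k fun h => hk ?_
  simp [h]

variable (c : ℤ → Fin (d+1) → ℝ) (i : ℤ)

theorem subd_apply_two_mul (hA : ∀ n, 2 < |n| → A n = 0) :
    subd A c (2*i) = (A 2).mulVec (c (i-1)) + (A 0).mulVec (c i)
      + (A (-2)).mulVec (c (i+1)) := by
  rw [subd_apply_eq_sum (s := {i-1, i, i+1}) c _ fun k hk => by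
    by_contra h; simp only [Finset.mem_insert, Finset.mem_singleton] at h
    exact hk (hA _ (by rw [lt_abs]; omega))]
  rw [Finset.sum_insert (by simp; omega), Finset.sum_pair (by omega), ← add_assoc,
    show 2*i - 2*(i-1) = 2 by ring, show 2*i - 2*i = 0 by ring, show 2*i - 2*(i+1) = -2 by ring]

theorem subd_apply_two_mul_add_one (hA : ∀ n, 2 < |n| → A n = 0) :
    subd A c (2*i+1) = (A 1).mulVec (c i) + (A (-1)).mulVec (c (i+1)) := by
  rw [subd_apply_eq_sum (s := {i, i+1}) c _ fun k hk => by
    by_contra h; simp only [Finset.mem_insert, Finset.mem_singleton] at h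
    exact hk (hA _ (by rw [lt_abs]; omega))]
  rw [Finset.sum_pair (by omega), show 2*i+1 - 2*i = 1 by ring,
    show 2*i+1 - 2*(i+1) = -1 by ring]

end Subdivision

theorem a1_eq_zero {n : ℤ} (hn : 2 < |n|) : a1 n = 0 := by
  rw [lt_abs] at hn
  unfold a1; split_ifs <;> first | omega | rfl

theorem subd_a1_two_mul (c : ℤ → Fin 2 → ℝ) (i : ℤ) :
    subd a1 c (2*i) =
      ![1/128 * (c (i-1) 0 + c (i+1) 0) + 63/64 * c i 0 + 7/256 * (c (i+1) 1 - c (i-1) 1),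
        1/16 * (c (i-1) 1 + c (i+1) 1) + 3/8 * c i 1] := by
  rw [subd_apply_two_mul c i fun _ => a1_eq_zero]
  ext m; fin_cases m <;> simp [a1, dotProduct] <;> ring

theorem subd_a1_two_mul_add_one (c : ℤ → Fin 2 → ℝ) (i : ℤ) :
    subd a1 c (2*i+1) =
      ![1/2 * (c i 0 + c (i+1) 0) + 1/16 * (c i 1 - c (i+1) 1),
        15/16 * (c (i+1) 0 - c i 0) - 7/32 * (c i 1 + c (i+1) 1)] := by
  rw [subd_apply_two_mul_add_one c i fun _ => a1_eq_zero]
  ext m; fin_cases m <;> simp [a1, dotProduct] <;> ring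

theorem vF_one_apply (f : ℝ → ℝ) (j : ℤ) : vF 1 f j = ![f j, deriv f j] := by
  ext m; fin_cases m <;> simp [vF]

theorem a1_spectral_order_two :
    (subd a1 (vF 1 (fun _ => (1:ℝ))) = fun j => ((2:ℝ)^(0:ℕ))⁻¹ • vF 1 (fun _ => (1:ℝ)) j)
  ∧ (subd a1 (vF 1 (fun x => x)) = fun j => ((2:ℝ)^(1:ℕ))⁻¹ • vF 1 (fun x => x) j)
  ∧ (subd a1 (vF 1 (fun x => x^2/2 - 1/12))
      = fun j => ((2:ℝ)^(2:ℕ))⁻¹ • vF 1 (fun x => x^2/2 - 1/12) j) := by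
  refine ⟨?_, ?_, ?_⟩ <;> funext j <;> obtain ⟨i, rfl | rfl⟩ := Int.even_or_odd' j <;>
    simp only [subd_a1_two_mul, subd_a1_two_mul_add_one, vF_one_apply] <;>
    ext m <;> fin_cases m <;> simp <;> ring
end

section
/- Neither S_{a^1} nor S_{a^2} (masks as specified) reproduces all polynomials of degree 2 with primal parametrization τ = 0: for initial data c^{[0]}_j = [j²/2, j]^T, the first iterate c^{[1]} = D^{-1} S_A c^{[0]} does not equal j ↦ [(j/2)²/2, j/2]^T. -/
/-!
For a mask supported in `[-2, 2]` the value of `S_A c` at `0` is `A 2 c (-1) + A 0 c 0 + A (-2) c 1`.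
For `c j = [j²/2, j]` this has first entry `A 2 0 0 / 2 - A 2 0 1 + A (-2) 0 0 / 2 + A (-2) 0 1`,
which reproduction would force to equal `q 0 = 0`; it is `1/16` for `a1` and `1/28` for `a2`.
-/

open scoped Matrix

lemma finsum_int_eq_of_eq_zero_of_one_lt_abs {M : Type*} [AddCommMonoid M] (f : ℤ → M)
    (hf : ∀ k : ℤ, 1 < |k| → f k = 0) :
    ∑ᶠ k, f k = f (-1) + f 0 + f 1 := by
  rw [finsum_eq_finsetSum_of_support_subset f (s := {-1, 0, 1})]
  · simp only [Finset.sum_insert (by decide : (-1 : ℤ) ∉ ({0, 1} : Finset ℤ)),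
      Finset.sum_insert (by decide : (0 : ℤ) ∉ ({1} : Finset ℤ)), Finset.sum_singleton, add_assoc]
  · intro k hk
    by_contra hmem
    simp only [Finset.coe_insert, Finset.coe_singleton, Set.mem_insert_iff,
      Set.mem_singleton_iff, not_or] at hmem
    exact hk (hf k (by rw [lt_abs, lt_neg]; omega))

lemma subd_apply_zero {d : ℕ} {A : ℤ → Matrix (Fin (d+1)) (Fin (d+1)) ℝ}
    (hA : ∀ i : ℤ, 2 < |i| → A i = 0) (c : ℤ → Fin (d+1) → ℝ) :
    subd A c 0 = A 2 *ᵥ c (-1) + A 0 *ᵥ c 0 + A (-2) *ᵥ c 1 := by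
  rw [subd, finsum_int_eq_of_eq_zero_of_one_lt_abs]
  · norm_num
  · intro k hk
    rw [hA _ (by rw [zero_sub, abs_neg, abs_mul]; norm_num; linarith), Matrix.zero_mulVec]

lemma Dinv_subd_quadratic_apply_zero_zero {A : ℤ → Matrix (Fin 2) (Fin 2) ℝ}
    (hA : ∀ i : ℤ, 2 < |i| → A i = 0) :
    Dinv 1 1 (subd A (fun j => ![(j:ℝ)^2/2, (j:ℝ)])) 0 0
      = A 2 0 0 / 2 - A 2 0 1 + A (-2) 0 0 / 2 + A (-2) 0 1 := by
  rw [Dinv, subd_apply_zero hA]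
  simp [Matrix.mulVec_fin_two, sub_eq_add_neg, div_eq_mul_inv, add_assoc]

lemma not_reproduces_quadratic {A : ℤ → Matrix (Fin 2) (Fin 2) ℝ}
    (hA : ∀ i : ℤ, 2 < |i| → A i = 0) (h : A 2 0 0 / 2 - A 2 0 1 + A (-2) 0 0 / 2 + A (-2) 0 1 ≠ 0) :
    Dinv 1 1 (subd A (fun j => ![(j:ℝ)^2/2, (j:ℝ)])) ≠ fun (j : ℤ) => ![((j:ℝ)/2)^2/2, (j:ℝ)/2] := by
  intro hrep
  have h00 := congrFun (congrFun hrep 0) 0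
  rw [Dinv_subd_quadratic_apply_zero_zero hA] at h00
  exact h (by simpa using h00)

lemma a1_eq_zero_s13 {i : ℤ} (hi : 2 < |i|) : a1 i = 0 := by
  rw [lt_abs, lt_neg] at hi
  unfold a1
  split_ifs <;> first | rfl | omega

lemma a2_eq_zero {i : ℤ} (hi : 2 < |i|) : a2 i = 0 := by
  rw [lt_abs, lt_neg] at hi
  unfold a2
  split_ifs <;> first | rfl | omega

theorem a1_a2_no_quadratic_reproduction :
    (Dinv 1 1 (subd a1 (fun j => ![(j:ℝ)^2/2, (j:ℝ)]))
      ≠ fun (j : ℤ) => ![((j:ℝ)/2)^2/2, (j:ℝ)/2])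
  ∧ (Dinv 1 1 (subd a2 (fun j => ![(j:ℝ)^2/2, (j:ℝ)]))
      ≠ fun (j : ℤ) => ![((j:ℝ)/2)^2/2, (j:ℝ)/2]) :=
  ⟨not_reproduces_quadratic (fun _ => a1_eq_zero_s13) (by norm_num [a1]),
    not_reproduces_quadratic (fun _ => a2_eq_zero) (by norm_num [a2])⟩
end
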